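/- arXiv:1909.07112 — 2 statements merged into one kernel-verified Lean document; each statement's English description precedes it below -/
import Mathlib

section
/- For every complex q with |q| < 1, the infinite product g(q) = ∏_{j=1}^{∞} (1 + q^j)(1 - q^{2j-1}) equals 1. -/
/-!
Euler's trick: `∏ (1 + q^(n+1)) · ∏ (1 - q^(n+1)) = ∏ (1 - q^(2n+2))`, while splitting
`∏ (1 - q^(n+1))` into odd and even exponents gives `∏ (1 - q^(2n+1)) · ∏ (1 - q^(2n+2))`.
Hence `∏ (1 + q^(n+1)) · ∏ (1 - q^(2n+1)) · C = C` for `C = ∏ (1 - q^(2n+2))`, which is nonzero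
because its factors are nonzero and `∑ ‖q^(2n+2)‖` converges.
-/

section ExponentSubsequence

variable {R : Type*} [NormedCommRing R] [NormOneClass R] {q : R} {e : ℕ → ℕ}

theorem summable_norm_pow_comp (hq : ‖q‖ < 1) (he : ∀ n, n < e n) :
    Summable fun n ↦ ‖q ^ e n‖ :=
  (summable_geometric_of_lt_one (norm_nonneg q) hq).of_nonneg_of_le (fun _ ↦ norm_nonneg _)
    fun n ↦ (norm_pow_le _ _).trans (pow_le_pow_of_le_one (norm_nonneg q) hq.le (he n).le)

variable [CompleteSpace R]

theorem multipliable_one_add_pow_comp (hq : ‖q‖ < 1) (he : ∀ n, n < e n) :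
    Multipliable fun n ↦ 1 + q ^ e n :=
  multipliable_one_add_of_summable (summable_norm_pow_comp hq he)

theorem multipliable_one_sub_pow_comp (hq : ‖q‖ < 1) (he : ∀ n, n < e n) :
    Multipliable fun n ↦ 1 - q ^ e n := by
  simpa only [sub_eq_add_neg] using
    multipliable_one_add_of_summable (f := fun n ↦ -q ^ e n) (by
      simpa only [norm_neg] using summable_norm_pow_comp hq he)

theorem tprod_one_sub_pow_comp_ne_zero [NormMulClass R] (hq : ‖q‖ < 1) (he : ∀ n, n < e n) :
    ∏' n, (1 - q ^ e n) ≠ 0 := by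
  have hne : ∀ n, 1 + -q ^ e n ≠ 0 := fun n h ↦ by
    have hpow : q ^ e n = 1 := by linear_combination -h
    have : ‖q‖ ^ e n < 1 := pow_lt_one₀ (norm_nonneg q) hq (Nat.zero_lt_of_lt (he n)).ne'
    simp [← norm_pow, hpow] at this
  simpa only [sub_eq_add_neg] using tprod_one_add_ne_zero_of_summable hne (by
    simpa only [norm_neg] using summable_norm_pow_comp hq he)

end ExponentSubsequence

section Euler

variable {R : Type*} [NormedCommRing R] [NormOneClass R] [CompleteSpace R] {q : R}

theorem tprod_one_sub_pow_odd_mul_tprod_one_sub_pow_even (hq : ‖q‖ < 1) :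
    (∏' n : ℕ, (1 - q ^ (2 * n + 1))) * ∏' n : ℕ, (1 - q ^ (2 * n + 2)) =
      ∏' n : ℕ, (1 - q ^ (n + 1)) :=
  tprod_even_mul_odd (f := fun n ↦ 1 - q ^ (n + 1))
    (multipliable_one_sub_pow_comp hq fun n ↦ by omega)
    (multipliable_one_sub_pow_comp hq fun n ↦ by omega)

theorem tprod_one_add_pow_mul_tprod_one_sub_pow (hq : ‖q‖ < 1) :
    (∏' n : ℕ, (1 + q ^ (n + 1))) * ∏' n : ℕ, (1 - q ^ (n + 1)) =
      ∏' n : ℕ, (1 - q ^ (2 * n + 2)) := by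
  rw [← (multipliable_one_add_pow_comp hq fun n ↦ n.lt_add_one).tprod_mul
    (multipliable_one_sub_pow_comp hq fun n ↦ n.lt_add_one)]
  congr 1 with n
  ring

theorem tprod_one_add_pow_mul_tprod_one_sub_pow_odd [NormMulClass R] (hq : ‖q‖ < 1) :
    (∏' n : ℕ, (1 + q ^ (n + 1))) * ∏' n : ℕ, (1 - q ^ (2 * n + 1)) = 1 := by
  have hC : ∏' n : ℕ, (1 - q ^ (2 * n + 2)) ≠ 0 :=
    tprod_one_sub_pow_comp_ne_zero hq fun n ↦ by omega
  refine mul_right_cancel₀ hC ?_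
  rw [one_mul, mul_assoc, tprod_one_sub_pow_odd_mul_tprod_one_sub_pow_even hq,
    tprod_one_add_pow_mul_tprod_one_sub_pow hq]

end Euler

/-- For `|q| < 1`, the infinite product `∏_{j=1}^∞ (1 + q^j)(1 - q^{2j-1})` equals `1`. -/
theorem tprod_one_add_mul_one_sub_eq_one (q : ℂ) (hq : ‖q‖ < 1) :
    (∏' j : ℕ, (1 + q ^ (j + 1)) * (1 - q ^ (2 * (j + 1) - 1))) = 1 := by
  have hodd : ∀ j : ℕ, 2 * (j + 1) - 1 = 2 * j + 1 := fun j ↦ by omega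
  simp_rw [hodd]
  rw [(multipliable_one_add_pow_comp hq fun n ↦ n.lt_add_one).tprod_mul
    (multipliable_one_sub_pow_comp hq fun n ↦ by omega)]
  exact tprod_one_add_pow_mul_tprod_one_sub_pow_odd hq
end

section
/- For 0 < q < 1, log θ₃(q) = -2 ∑_{j=1}^{∞} (-1)^j ∑_{k=0}^{∞} q^{j(2k+1)}/(2k+1), with absolute convergence of the double series. -/
/-!
Gauss's `q`-binomial theorem, applied with base `q²` to the `2N` factors `1 + q^(2j+1-2N)`, gives
the finite identity `∏_{j<N} (1 + q^(2j+1))² = ∑_{|m| ≤ N} [2N, N+m]_{q²} q^(m²)`. Multiplying by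
`(q²; q²)_N` and letting `N → ∞` by dominated convergence (each Gaussian binomial is at most
`1 / (q²; q²)_∞`) yields Jacobi's product `θ₃(q) = ∏ (1 - q^(2n)) (1 + q^(2n-1))²`.
Each inner series of the double series is `½ log ((1 + q^j) / (1 - q^j))`; splitting the resulting
alternating series by parity and using `log (1 + x) + log (1 - x) = log (1 - x²)` (Euler's
`∏ (1 + q^n) ∏ (1 - q^(2n-1)) = 1`) matches it with the logarithm of Jacobi's product.
-/

open Finset Filter Topology

section GaussianBinomial

variable {K : Type*} [Field K] (t : K)

/-- `(t; t)_k`. -/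
def qPochhammer (k : ℕ) : K := ∏ i ∈ range k, (1 - t ^ (i + 1))

/-- For `k > n` the factor `i = n` is `1 - t ^ (n - n) = 0`, so `gaussBinom t n k = 0`. -/
def qDescPochhammer (n k : ℕ) : K := ∏ i ∈ range k, (1 - t ^ (n - i))

def gaussBinom (n k : ℕ) : K := qDescPochhammer t n k / qPochhammer t k

variable {t}

lemma qPochhammer_succ (k : ℕ) : qPochhammer t (k + 1) = qPochhammer t k * (1 - t ^ (k + 1)) :=
  prod_range_succ _ _

lemma qPochhammer_ne_zero (ht : ∀ i, t ^ (i + 1) ≠ 1) (k : ℕ) : qPochhammer t k ≠ 0 :=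
  prod_ne_zero_iff.2 fun i _ => sub_ne_zero.2 (ht i).symm

lemma qDescPochhammer_eq_zero_of_lt {n k : ℕ} (h : n < k) : qDescPochhammer t n k = 0 :=
  prod_eq_zero (mem_range.2 h) (by simp)

lemma qDescPochhammer_mul_qPochhammer {n k : ℕ} (h : k ≤ n) :
    qDescPochhammer t n k * qPochhammer t (n - k) = qPochhammer t n := by
  obtain ⟨m, rfl⟩ := Nat.exists_eq_add_of_le h
  rw [qPochhammer, qPochhammer, add_comm k m, Nat.add_sub_cancel, prod_range_add, mul_comm,
    qDescPochhammer]
  refine congrArg _ ?_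
  rw [← prod_range_reflect]
  refine prod_congr rfl fun i hi => ?_
  rw [mem_range] at hi
  congr 2
  omega

@[simp] lemma gaussBinom_zero_right (n : ℕ) : gaussBinom t n 0 = 1 := by
  simp [gaussBinom, qDescPochhammer, qPochhammer]

lemma gaussBinom_eq_zero_of_lt {n k : ℕ} (h : n < k) : gaussBinom t n k = 0 := by
  rw [gaussBinom, qDescPochhammer_eq_zero_of_lt h, zero_div]

lemma gaussBinom_eq {n k : ℕ} (ht : ∀ i, t ^ (i + 1) ≠ 1) (h : k ≤ n) :
    gaussBinom t n k = qPochhammer t n / (qPochhammer t k * qPochhammer t (n - k)) := by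
  rw [gaussBinom, ← qDescPochhammer_mul_qPochhammer h]
  field_simp [qPochhammer_ne_zero ht]

lemma gaussBinom_succ_succ (ht : ∀ i, t ^ (i + 1) ≠ 1) (n k : ℕ) :
    gaussBinom t (n + 1) (k + 1) = gaussBinom t n k + t ^ (k + 1) * gaussBinom t n (k + 1) := by
  have hD : qDescPochhammer t (n + 1) (k + 1) = (1 - t ^ (n + 1)) * qDescPochhammer t n k := by
    simp only [qDescPochhammer, prod_range_succ', Nat.sub_zero, Nat.add_sub_add_right, mul_comm]
  have hD' : qDescPochhammer t n (k + 1) = qDescPochhammer t n k * (1 - t ^ (n - k)) :=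
    prod_range_succ _ _
  have hP := qPochhammer_ne_zero ht k
  have hk : 1 - t ^ (k + 1) ≠ 0 := sub_ne_zero.2 (ht k).symm
  rcases lt_or_ge n k with hnk | hkn
  · simp [gaussBinom, hD, hD', qDescPochhammer_eq_zero_of_lt hnk]
  · have hpow : t ^ (k + 1) * t ^ (n - k) = t ^ (n + 1) := by rw [← pow_add]; congr 1; omega
    simp only [gaussBinom, hD, hD', qPochhammer_succ]
    field_simp
    linear_combination qDescPochhammer t n k * hpow

/-- Gauss's `q`-binomial theorem. -/
theorem prod_one_add_mul_pow_eq_sum (ht : ∀ i, t ^ (i + 1) ≠ 1) (z : K) (n : ℕ) :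
    ∏ j ∈ range n, (1 + z * t ^ j) =
      ∑ k ∈ range (n + 1), t ^ k.choose 2 * gaussBinom t n k * z ^ k := by
  induction n generalizing z with
  | zero => simp
  | succ n ih =>
    set S := ∑ k ∈ range (n + 1), t ^ k.choose 2 * gaussBinom t n k * (z * t) ^ k with hS
    have hchoose (k : ℕ) : (k + 1).choose 2 = k.choose 2 + k := by
      rw [Nat.choose_succ_succ, Nat.choose_one_right, add_comm]
    have hlow : ∑ k ∈ range (n + 1), t ^ (k + 1).choose 2 * gaussBinom t n k * z ^ (k + 1) =
        z * S := by
      rw [mul_sum]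
      refine sum_congr rfl fun k _ => ?_
      rw [hchoose, pow_add, pow_succ, mul_pow]
      ring
    have hhigh : ∑ k ∈ range (n + 1),
        t ^ (k + 1).choose 2 * (t ^ (k + 1) * gaussBinom t n (k + 1)) * z ^ (k + 1) = S - 1 := by
      rw [sum_range_succ, gaussBinom_eq_zero_of_lt (Nat.lt_succ_self n), hS, sum_range_succ' _ n]
      simp only [Nat.choose_zero_succ, pow_zero, gaussBinom_zero_right, mul_zero, zero_mul,
        add_zero, mul_one, add_sub_cancel_right]
      exact sum_congr rfl fun k _ => by ring
    calc ∏ j ∈ range (n + 1), (1 + z * t ^ j)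
        = (1 + z) * ∏ j ∈ range n, (1 + z * t * t ^ j) := by
          rw [prod_range_succ', pow_zero, mul_one, mul_comm]
          exact congrArg _ (prod_congr rfl fun j _ => by ring)
      _ = (1 + z) * S := by rw [ih]
      _ = 1 + z * S + (S - 1) := by ring
      _ = _ := by
          rw [sum_range_succ' _ (n + 1), ← hlow, ← hhigh]
          simp only [gaussBinom_succ_succ ht, mul_add, add_mul, sum_add_distrib,
            Nat.choose_zero_succ, pow_zero, gaussBinom_zero_right, mul_one]
          ring

lemma two_mul_natCast_choose_two (k : ℕ) : 2 * (k.choose 2 : ℤ) = k * (k - 1) := by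
  induction k with
  | zero => simp
  | succ k ih =>
    rw [Nat.choose_succ_succ, Nat.choose_one_right]
    push_cast
    linear_combination ih

lemma sum_range_two_mul_add_one (N : ℕ) : ∑ j ∈ range N, (2 * j + 1) = N ^ 2 := by
  induction N with
  | zero => simp
  | succ n ih => rw [sum_range_succ, ih]; ring

/-- Pairing the factor `j` of the left product with the factor `2N - 1 - j`. -/
lemma pow_sq_mul_prod_one_add_zpow {q : K} (hq : q ≠ 0) (N : ℕ) :
    q ^ (N ^ 2) * ∏ j ∈ range (2 * N), (1 + q ^ (2 * j + 1 - 2 * N : ℤ)) =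
      (∏ j ∈ range N, (1 + q ^ (2 * j + 1))) ^ 2 := by
  rw [two_mul N, prod_range_add, ← prod_range_reflect, ← sum_range_two_mul_add_one,
    ← prod_pow_eq_pow_sum, ← mul_assoc, ← prod_mul_distrib, ← prod_mul_distrib, ← prod_pow]
  refine prod_congr rfl fun j hj => ?_
  have hj : j < N := mem_range.1 hj
  have hlow : (2 * (N - 1 - j : ℕ) + 1 - 2 * N : ℤ) = -((2 * j + 1 : ℕ) : ℤ) := by
    have : ((N - 1 - j : ℕ) : ℤ) = N - 1 - j := by omega
    push_cast [this]
    ring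
  have hhigh : (2 * (N + j : ℕ) + 1 - 2 * N : ℤ) = ((2 * j + 1 : ℕ) : ℤ) := by
    push_cast
    ring
  rw [hlow, hhigh, zpow_neg, zpow_natCast]
  field_simp
  ring

/-- The finite form of Jacobi's triple product at `z = 1`. -/
theorem sq_prod_one_add_pow_odd {q : K} (hq : q ≠ 0) (ht : ∀ i, (q ^ 2) ^ (i + 1) ≠ 1) (N : ℕ) :
    (∏ j ∈ range N, (1 + q ^ (2 * j + 1))) ^ 2 =
      ∑ m ∈ Icc (-N : ℤ) N, gaussBinom (q ^ 2) (2 * N) (N + m).toNat * q ^ (m ^ 2) := by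
  have hzpow (j : ℕ) : q ^ (1 - 2 * N : ℤ) * (q ^ 2) ^ j = q ^ (2 * j + 1 - 2 * N : ℤ) := by
    rw [← pow_mul, ← zpow_natCast, ← zpow_add₀ hq]
    push_cast
    ring_nf
  have hgauss := prod_one_add_mul_pow_eq_sum ht (q ^ (1 - 2 * N : ℤ)) (2 * N)
  simp_rw [hzpow] at hgauss
  have hterm (k : ℕ) : q ^ (N ^ 2) * ((q ^ 2) ^ k.choose 2 * gaussBinom (q ^ 2) (2 * N) k *
      (q ^ (1 - 2 * N : ℤ)) ^ k) = gaussBinom (q ^ 2) (2 * N) k * q ^ (((k : ℤ) - N) ^ 2) := by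
    have hexp : ((N ^ 2 : ℕ) : ℤ) + 2 * (k.choose 2 : ℤ) + (1 - 2 * N) * k = ((k : ℤ) - N) ^ 2 := by
      rw [two_mul_natCast_choose_two]
      push_cast
      ring
    have h1 : (q ^ 2) ^ k.choose 2 = q ^ (2 * (k.choose 2 : ℤ)) := by rw [zpow_mul]; norm_cast
    have h2 : (q ^ (1 - 2 * N : ℤ)) ^ k = q ^ ((1 - 2 * N) * k : ℤ) := by rw [zpow_mul]; norm_cast
    rw [h1, h2, ← zpow_natCast q (N ^ 2), ← hexp, zpow_add₀ hq, zpow_add₀ hq]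
    ring
  rw [← pow_sq_mul_prod_one_add_zpow hq, hgauss, mul_sum]
  simp only [hterm]
  refine sum_nbij' (fun k => (k : ℤ) - N) (fun m => (N + m).toNat) ?_ ?_ ?_ ?_
    fun k _ => by rw [add_sub_cancel, Int.toNat_natCast]
  all_goals intro a ha; simp only [mem_range, mem_Icc] at ha ⊢; omega

end GaussianBinomial

section QPochhammerLimit

variable {t : ℝ}

lemma one_sub_pow_succ_pos (ht0 : 0 ≤ t) (ht1 : t < 1) (i : ℕ) : 0 < 1 - t ^ (i + 1) :=
  sub_pos.2 (pow_lt_one₀ ht0 ht1 i.succ_ne_zero)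

lemma pow_succ_ne_one (ht0 : 0 ≤ t) (ht1 : t < 1) (i : ℕ) : t ^ (i + 1) ≠ 1 :=
  (pow_lt_one₀ ht0 ht1 i.succ_ne_zero).ne

lemma summable_pow_succ (ht0 : 0 ≤ t) (ht1 : t < 1) : Summable fun i : ℕ => t ^ (i + 1) :=
  (summable_nat_add_iff 1).2 (summable_geometric_of_lt_one ht0 ht1)

lemma summable_log_one_sub_pow_succ (ht0 : 0 ≤ t) (ht1 : t < 1) :
    Summable fun i : ℕ => Real.log (1 - t ^ (i + 1)) := by
  simpa [sub_eq_add_neg] using Real.summable_log_one_add_of_summable (summable_pow_succ ht0 ht1).neg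

lemma hasProd_one_sub_pow_succ (ht0 : 0 ≤ t) (ht1 : t < 1) :
    HasProd (fun i : ℕ => 1 - t ^ (i + 1)) (Real.exp (∑' i : ℕ, Real.log (1 - t ^ (i + 1)))) :=
  Real.hasProd_of_hasSum_log (one_sub_pow_succ_pos ht0 ht1)
    (summable_log_one_sub_pow_succ ht0 ht1).hasSum

lemma tprod_one_sub_pow_succ_pos (ht0 : 0 ≤ t) (ht1 : t < 1) :
    0 < ∏' i : ℕ, (1 - t ^ (i + 1)) := by
  rw [(hasProd_one_sub_pow_succ ht0 ht1).tprod_eq]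
  exact Real.exp_pos _

lemma tendsto_qPochhammer (ht0 : 0 ≤ t) (ht1 : t < 1) :
    Tendsto (qPochhammer t) atTop (𝓝 (∏' i : ℕ, (1 - t ^ (i + 1)))) :=
  (hasProd_one_sub_pow_succ ht0 ht1).multipliable.hasProd.tendsto_prod_nat

lemma antitone_qPochhammer (ht0 : 0 ≤ t) (ht1 : t < 1) : Antitone (qPochhammer t) :=
  antitone_nat_of_succ_le fun k => by
    rw [qPochhammer_succ]
    refine mul_le_of_le_one_right ?_ (sub_le_self _ (pow_nonneg ht0 _))
    exact prod_nonneg fun i _ => (one_sub_pow_succ_pos ht0 ht1 i).le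

lemma tprod_le_qPochhammer (ht0 : 0 ≤ t) (ht1 : t < 1) (k : ℕ) :
    ∏' i : ℕ, (1 - t ^ (i + 1)) ≤ qPochhammer t k :=
  (antitone_qPochhammer ht0 ht1).le_of_tendsto (tendsto_qPochhammer ht0 ht1) k

lemma qPochhammer_le_one (ht0 : 0 ≤ t) (ht1 : t < 1) (k : ℕ) : qPochhammer t k ≤ 1 :=
  antitone_qPochhammer ht0 ht1 k.zero_le

lemma gaussBinom_nonneg (ht0 : 0 ≤ t) (ht1 : t < 1) (n k : ℕ) : 0 ≤ gaussBinom t n k :=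
  div_nonneg (prod_nonneg fun _ _ => sub_nonneg.2 (pow_le_one₀ ht0 ht1.le))
    (prod_nonneg fun i _ => (one_sub_pow_succ_pos ht0 ht1 i).le)

lemma gaussBinom_le_inv_tprod (ht0 : 0 ≤ t) (ht1 : t < 1) (n k : ℕ) :
    gaussBinom t n k ≤ (∏' i : ℕ, (1 - t ^ (i + 1)))⁻¹ := by
  rw [gaussBinom, ← one_div]
  refine div_le_div₀ zero_le_one ?_ (tprod_one_sub_pow_succ_pos ht0 ht1)
    (tprod_le_qPochhammer ht0 ht1 k)
  exact prod_le_one (fun _ _ => sub_nonneg.2 (pow_le_one₀ ht0 ht1.le))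
    fun _ _ => sub_le_self _ (pow_nonneg ht0 _)

end QPochhammerLimit

section JacobiTripleProduct

variable {q : ℝ}

lemma summable_zpow_sq (hq0 : 0 ≤ q) (hq1 : q < 1) : Summable fun m : ℤ => q ^ (m ^ 2) := by
  have hnat : Summable fun n : ℕ => q ^ ((n : ℤ) ^ 2) := by
    refine (summable_geometric_of_lt_one hq0 hq1).of_nonneg_of_le (fun n => by positivity)
      fun n => ?_
    rw [← Nat.cast_pow, zpow_natCast]
    exact pow_le_pow_of_le_one hq0 hq1.le (Nat.le_self_pow two_ne_zero n)
  exact .of_nat_of_neg hnat (by simpa using hnat)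

noncomputable def jacobiTerm (q : ℝ) (N : ℕ) : ℤ → ℝ :=
  Set.indicator (Icc (-N : ℤ) N) fun m =>
    qPochhammer (q ^ 2) N * gaussBinom (q ^ 2) (2 * N) (N + m).toNat * q ^ (m ^ 2)

lemma tsum_jacobiTerm (hq0 : 0 < q) (hq1 : q < 1) (N : ℕ) :
    ∑' m, jacobiTerm q N m = qPochhammer (q ^ 2) N * (∏ j ∈ range N, (1 + q ^ (2 * j + 1))) ^ 2 := by
  have hq2 : q ^ 2 < 1 := pow_lt_one₀ hq0.le hq1 two_ne_zero
  rw [jacobiTerm, ← sum_eq_tsum_indicator, sq_prod_one_add_pow_odd hq0.ne'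
    (pow_succ_ne_one (sq_nonneg q) hq2), mul_sum]
  exact sum_congr rfl fun m _ => mul_assoc _ _ _

lemma abs_jacobiTerm_le (hq0 : 0 < q) (hq1 : q < 1) (N : ℕ) (m : ℤ) :
    |jacobiTerm q N m| ≤ (∏' i : ℕ, (1 - (q ^ 2) ^ (i + 1)))⁻¹ * q ^ (m ^ 2) := by
  have hq2 : q ^ 2 < 1 := pow_lt_one₀ hq0.le hq1 two_ne_zero
  have hC := tprod_one_sub_pow_succ_pos (sq_nonneg q) hq2
  unfold jacobiTerm
  by_cases hm : m ∈ (Icc (-N : ℤ) N : Set ℤ)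
  · have hb := gaussBinom_nonneg (sq_nonneg q) hq2 (2 * N) (N + m).toNat
    have hP := hC.trans_le (tprod_le_qPochhammer (sq_nonneg q) hq2 N)
    rw [Set.indicator_of_mem hm, abs_of_nonneg (by positivity)]
    gcongr
    exact (mul_le_of_le_one_left hb (qPochhammer_le_one (sq_nonneg q) hq2 N)).trans
      (gaussBinom_le_inv_tprod (sq_nonneg q) hq2 _ _)
  · rw [Set.indicator_of_notMem hm, abs_zero]
    positivity

lemma tendsto_jacobiTerm (hq0 : 0 < q) (hq1 : q < 1) (m : ℤ) :
    Tendsto (fun N => jacobiTerm q N m) atTop (𝓝 (q ^ (m ^ 2))) := by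
  have hq2 : q ^ 2 < 1 := pow_lt_one₀ hq0.le hq1 two_ne_zero
  set P := qPochhammer (q ^ 2)
  set C := ∏' i : ℕ, (1 - (q ^ 2) ^ (i + 1))
  have hC : C * C ≠ 0 := (mul_pos (tprod_one_sub_pow_succ_pos (sq_nonneg q) hq2)
    (tprod_one_sub_pow_succ_pos (sq_nonneg q) hq2)).ne'
  have hP {f : ℕ → ℕ} (hf : ∀ N, N ≤ f N + m.natAbs) : Tendsto (P ∘ f) atTop (𝓝 C) :=
    (tendsto_qPochhammer (sq_nonneg q) hq2).comp <|
      tendsto_atTop_atTop.2 fun b => ⟨b + m.natAbs, fun N hN => by have := hf N; omega⟩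
  have hlim := (((hP (f := id) (by simp)).mul (hP (f := (2 * ·)) (by omega))).div
    ((hP (f := fun N => (N + m).toNat) (by omega)).mul
      (hP (f := fun N => 2 * N - (N + m).toNat) (by omega))) hC).mul_const (q ^ (m ^ 2))
  rw [div_self hC, one_mul] at hlim
  refine hlim.congr' ?_
  filter_upwards [eventually_ge_atTop m.natAbs] with N hN
  rw [jacobiTerm, Set.indicator_of_mem (by simp only [coe_Icc, Set.mem_Icc]; omega),
    gaussBinom_eq (pow_succ_ne_one (sq_nonneg q) hq2) (by omega)]
  simp only [Pi.div_apply, Function.comp_apply, id, P]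
  ring

end JacobiTripleProduct

section Logarithm

variable {q : ℝ}

lemma summable_pow_two_mul_add_one (hq0 : 0 ≤ q) (hq1 : q < 1) :
    Summable fun j : ℕ => q ^ (2 * j + 1) := by
  exact ((summable_geometric_of_lt_one (sq_nonneg q) (pow_lt_one₀ hq0 hq1 two_ne_zero)).mul_left
    q).congr fun j => by ring

/-- Jacobi's triple product at `z = 1`. -/
theorem tsum_zpow_sq_eq_tprod (hq0 : 0 < q) (hq1 : q < 1) :
    ∑' m : ℤ, q ^ (m ^ 2) =
      (∏' i : ℕ, (1 - (q ^ 2) ^ (i + 1))) * (∏' j : ℕ, (1 + q ^ (2 * j + 1))) ^ 2 := by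
  have hq2 : q ^ 2 < 1 := pow_lt_one₀ hq0.le hq1 two_ne_zero
  have hlim := tendsto_tsum_of_dominated_convergence
    ((summable_zpow_sq hq0.le hq1).mul_left _) (tendsto_jacobiTerm hq0 hq1)
    (Eventually.of_forall fun N m => abs_jacobiTerm_le hq0 hq1 N m)
  simp_rw [tsum_jacobiTerm hq0 hq1] at hlim
  have hodd := (Real.multipliable_one_add_of_summable
    (summable_pow_two_mul_add_one hq0.le hq1)).hasProd.tendsto_prod_nat
  exact tendsto_nhds_unique hlim ((tendsto_qPochhammer (sq_nonneg q) hq2).mul (hodd.pow 2))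

lemma Real.log_tprod {ι : Type*} {f : ι → ℝ} (hf : ∀ i, 0 < f i)
    (hs : Summable fun i => Real.log (f i)) : Real.log (∏' i, f i) = ∑' i, Real.log (f i) := by
  rw [← Real.rexp_tsum_eq_tprod hf hs, Real.log_exp]

theorem log_tsum_zpow_sq (hq0 : 0 < q) (hq1 : q < 1) :
    Real.log (∑' m : ℤ, q ^ (m ^ 2)) =
      ∑' i : ℕ, Real.log (1 - q ^ (2 * i + 1 + 1)) +
        2 * ∑' i : ℕ, Real.log (1 + q ^ (2 * i + 1)) := by
  have hq2 : q ^ 2 < 1 := pow_lt_one₀ hq0.le hq1 two_ne_zero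
  have hodd : ∀ j : ℕ, 0 < 1 + q ^ (2 * j + 1) := fun j => by positivity
  have hP := tprod_one_sub_pow_succ_pos (sq_nonneg q) hq2
  have hQ : 0 < ∏' j : ℕ, (1 + q ^ (2 * j + 1)) := by
    rw [← Real.rexp_tsum_eq_tprod hodd]
    exacts [Real.exp_pos _,
      Real.summable_log_one_add_of_summable (summable_pow_two_mul_add_one hq0.le hq1)]
  rw [tsum_zpow_sq_eq_tprod hq0 hq1, Real.log_mul hP.ne' (pow_pos hQ 2).ne', Real.log_pow,
    Real.log_tprod (one_sub_pow_succ_pos (sq_nonneg q) hq2)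
      (summable_log_one_sub_pow_succ (sq_nonneg q) hq2),
    Real.log_tprod hodd
      (Real.summable_log_one_add_of_summable (summable_pow_two_mul_add_one hq0.le hq1))]
  simp only [← pow_mul, Nat.cast_ofNat]
  ring_nf

end Logarithm

section DoubleSeries

variable {q : ℝ}

lemma hasSum_pow_odd_div_odd {x : ℝ} (hx : |x| < 1) :
    HasSum (fun k : ℕ => x ^ (2 * k + 1) / (2 * k + 1))
      ((Real.log (1 + x) - Real.log (1 - x)) / 2) :=
  ((Real.hasSum_log_sub_log_of_abs_lt_one hx).div_const 2).congr_fun fun k => by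
    field_simp

lemma hasSum_pow_mul_odd_div_odd (hq0 : 0 ≤ q) (hq1 : q < 1) (j : ℕ) :
    HasSum (fun k : ℕ => q ^ ((j + 1) * (2 * k + 1)) / (2 * k + 1))
      ((Real.log (1 + q ^ (j + 1)) - Real.log (1 - q ^ (j + 1))) / 2) := by
  simpa only [pow_mul] using hasSum_pow_odd_div_odd (x := q ^ (j + 1))
    (by rw [abs_of_nonneg (by positivity)]; exact pow_lt_one₀ hq0 hq1 j.succ_ne_zero)

lemma log_one_add_pow_add_log_one_sub_pow (hq0 : 0 ≤ q) (hq1 : q < 1) (j : ℕ) :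
    Real.log (1 + q ^ (j + 1)) + Real.log (1 - q ^ (j + 1)) =
      Real.log (1 - q ^ (2 * j + 1 + 1)) := by
  rw [← Real.log_mul (by positivity) (one_sub_pow_succ_pos hq0 hq1 j).ne']
  congr 1
  ring

lemma tsum_neg_one_pow_mul_sub {a b : ℕ → ℝ} (ha : Summable a) (hb : Summable b)
    (hab : ∀ j, a j + b j = b (2 * j + 1)) :
    ∑' j, (-1) ^ j * (a j - b j) = ∑' i, b (2 * i + 1) + 2 * ∑' i, a (2 * i) := by
  have hev {f : ℕ → ℝ} (hf : Summable f) : Summable fun i => f (2 * i) :=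
    hf.comp_injective (mul_right_injective₀ two_ne_zero)
  have hodd {f : ℕ → ℝ} (hf : Summable f) : Summable fun i => f (2 * i + 1) :=
    hf.comp_injective fun i j h => by simpa using h
  have hab' : ∑' j, a j = ∑' j, b (2 * j + 1) - ∑' j, b j := by
    rw [← (hodd hb).tsum_sub hb]
    exact tsum_congr fun j => by rw [← hab]; ring
  have halt : ∑' j, (-1) ^ j * (a j - b j) =
      ∑' i, (a (2 * i) - b (2 * i)) - ∑' i, (a (2 * i + 1) - b (2 * i + 1)) := by
    rw [← tsum_even_add_odd (((hev ha).sub (hev hb)).congr fun i => by simp [pow_mul])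
      (((hodd ha).sub (hodd hb)).neg.congr fun i => by simp [pow_succ, pow_mul]),
      sub_eq_add_neg, ← tsum_neg]
    congr 1 <;> exact tsum_congr fun i => by simp [pow_succ, pow_mul]
  have hae := tsum_even_add_odd (hev ha) (hodd ha)
  have hbe := tsum_even_add_odd (hev hb) (hodd hb)
  rw [halt, (hev ha).tsum_sub (hev hb), (hodd ha).tsum_sub (hodd hb)]
  linarith

end DoubleSeries

/-- For `0 < q < 1`,
`log θ₃(q) = -2 ∑_{j=1}^∞ (-1)^j ∑_{k=0}^∞ q^{j(2k+1)}/(2k+1)`,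
with absolute convergence of the double series. -/
theorem log_theta3_double_series (q : ℝ) (hq0 : 0 < q) (hq1 : q < 1) :
    Summable (fun p : ℕ × ℕ => |q ^ ((p.1 + 1) * (2 * p.2 + 1)) / (2 * p.2 + 1)|) ∧
    Real.log (∑' n : ℤ, q ^ ((n : ℝ) ^ 2)) =
      -2 * ∑' j : ℕ, (-1 : ℝ) ^ (j + 1) *
        ∑' k : ℕ, q ^ ((j + 1) * (2 * k + 1)) / (2 * k + 1) := by
  set a : ℕ → ℝ := fun j => Real.log (1 + q ^ (j + 1))
  set b : ℕ → ℝ := fun j => Real.log (1 - q ^ (j + 1))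
  have ha : Summable a := Real.summable_log_one_add_of_summable (summable_pow_succ hq0.le hq1)
  have hb : Summable b := summable_log_one_sub_pow_succ hq0.le hq1
  have hinner := hasSum_pow_mul_odd_div_odd hq0.le hq1
  constructor
  · refine (summable_prod_of_nonneg fun _ => abs_nonneg _).2
      ⟨fun j => (hinner j).summable.abs, ((ha.sub hb).div_const 2).congr fun j => ?_⟩
    rw [← (hinner j).tsum_eq]
    exact tsum_congr fun k => (abs_of_nonneg (by positivity)).symm
  · have hθ : ∑' n : ℤ, q ^ ((n : ℝ) ^ 2) = ∑' m : ℤ, q ^ (m ^ 2) :=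
      tsum_congr fun n => by rw [← Real.rpow_intCast]; push_cast; rfl
    have halt (j : ℕ) : (-1 : ℝ) ^ (j + 1) * ((a j - b j) / 2) =
        -1 / 2 * ((-1) ^ j * (a j - b j)) := by
      ring
    simp only [fun j => (hinner j).tsum_eq]
    rw [hθ, log_tsum_zpow_sq hq0 hq1, tsum_congr halt, tsum_mul_left,
      tsum_neg_one_pow_mul_sub ha hb (log_one_add_pow_add_log_one_sub_pow hq0.le hq1)]
    ring
end
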